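/- In a labelled CFG in which every variable is defined before it is used, if node sets Q1 and Q2 are both closed under data dependence and Q1 ∩ Q2 = ∅, then rv(Q1,v) ∩ rv(Q2,v) = ∅ for every node v. -/

import Mathlib

namespace Slicing

/-- A path is a nonempty list of nodes, consecutive ones related by `succ`,
starting at `v` and ending at `v'`. -/
def IsPath {V : Type} (succ : V → V → Prop) (p : List V) (v v' : V) : Prop :=
  p.Chain' succ ∧ p.head? = some v ∧ p.getLast? = some v'

/-- A control-flow graph: an edge relation and an `End` node with no successors,
reachable from every node. -/
structure CFG (V : Type) where
  succ : V → V → Prop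
  End : V
  end_no_succ : ∀ w, ¬ succ End w
  reach_end : ∀ v, ∃ p, IsPath succ p v End

variable {V : Type}

/-- `v1` postdominates `v`. -/
def PD (G : CFG V) (v v1 : V) : Prop :=
  ∀ p, IsPath G.succ p v G.End → v1 ∈ p

/-- `v1` is a proper postdominator of `v`. -/
def ProperPD (G : CFG V) (v v1 : V) : Prop :=
  PD G v v1 ∧ v1 ≠ v

/-- `v1` is a first proper postdominator of `v`: every path from `v` to any other
proper postdominator of `v` contains `v1`. -/
def IsFPPD (G : CFG V) (v v1 : V) : Prop :=
  ProperPD G v v1 ∧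
    ∀ v2, ProperPD G v v2 → v2 ≠ v1 → ∀ p, IsPath G.succ p v v2 → v1 ∈ p

/-- Maximum number of edges of an acyclic path from `v` to `v'`. -/
noncomputable def LAP (G : CFG V) (v v' : V) : ℕ :=
  sSup {n | ∃ p, IsPath G.succ p v v' ∧ p.Nodup ∧ p.length = n + 1}

/-- A node is cycle-inducing if, with `v'` its first proper postdominator,
some successor `vi` of `v` satisfies `LAP vi v' ≥ LAP v v'`. -/
def CycleInducing (G : CFG V) (v : V) : Prop :=
  ∃ v', IsFPPD G v v' ∧ ∃ vi, G.succ v vi ∧ LAP G v v' ≤ LAP G vi v'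

/-- `v` stays outside `Q` until `v'`: every path from `v` to `v'` in which `v'`
occurs only at the final position contains no node of `Q` except possibly `v'`. -/
def StaysOutside (G : CFG V) (Q : Set V) (v v' : V) : Prop :=
  ∀ p, IsPath G.succ p v v' → v' ∉ p.dropLast → ∀ w ∈ p, w ∈ Q → w = v'

/-- `v2` is data dependent on `v1`. -/
def DataDep {Var : Type} (G : CFG V) (Def Use : V → Set Var) (v1 v2 : V) : Prop :=
  ∃ x, x ∈ Use v2 ∧ x ∈ Def v1 ∧
    ∃ p, IsPath G.succ p v1 v2 ∧ 2 ≤ p.length ∧ ∀ w ∈ p.tail.dropLast, x ∉ Def w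

/-- `Q` is closed under data dependence. -/
def ClosedDD {Var : Type} (G : CFG V) (Def Use : V → Set Var) (Q : Set V) : Prop :=
  ∀ v1 v2, v2 ∈ Q → DataDep G Def Use v1 v2 → v1 ∈ Q

/-- The `Q`-relevant variables at `v`. -/
def rv {Var : Type} (G : CFG V) (Def Use : V → Set Var) (Q : Set V) (v : V) : Set Var :=
  {x | ∃ v' ∈ Q, x ∈ Use v' ∧
    ∃ p, IsPath G.succ p v v' ∧ p.Nodup ∧ ∀ w ∈ p, w ≠ v' → x ∉ Def w}

/-- `v'` is a next visible in `Q` of `v`. -/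
def IsNextVisible (G : CFG V) (Q : Set V) (v v' : V) : Prop :=
  (v' ∈ Q ∨ v' = G.End) ∧
    ∀ u, (u ∈ Q ∨ u = G.End) → ∀ p, IsPath G.succ p v u → v' ∈ p

/-- `Q` provides next visibles. -/
def ProvidesNextVisibles (G : CFG V) (Q : Set V) : Prop :=
  ∀ v, ∃ v', IsNextVisible G Q v v'

/-- A weak slice set provides next visibles and is closed under data dependence. -/
def WeakSliceSet {Var : Type} (G : CFG V) (Def Use : V → Set Var) (Q : Set V) : Prop :=
  ProvidesNextVisibles G Q ∧ ClosedDD G Def Use Q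

end Slicing

/-!
If `x` is defined at `v`, the definition-clear condition of `rv` forces `v` to be the use
node itself, so `v ∈ Q1 ∩ Q2`. Otherwise def-before-use, applied to a path from `Start`
through `v` to a use, yields a definition of `x` before `v`; the last one, at `w`, reaches `v`
without redefinition and flows on along either `rv` path to a use in `Q1` resp. `Q2`.
Closure under data dependence then puts `w` into `Q1 ∩ Q2`.
-/

namespace Slicing

section Paths

variable {V : Type} {succ : V → V → Prop} {p q : List V} {a b c u : V}

theorem IsPath.ne_nil (hp : IsPath succ p a b) : p ≠ [] := by
  rintro rfl
  simp [IsPath] at hp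

theorem IsPath.head_mem (hp : IsPath succ p a b) : a ∈ p :=
  List.mem_of_mem_head? hp.2.1

theorem IsPath.tail {l : List V} (hp : IsPath succ (a :: b :: l) a c) :
    IsPath succ (b :: l) b c :=
  ⟨hp.1.tail, rfl, by simpa [List.getLast?_cons_cons] using hp.2.2⟩

theorem IsPath.append (hp : IsPath succ p a b) (hq : IsPath succ q b c) :
    IsPath succ (p ++ q.tail) a c := by
  obtain ⟨hpc, hph, hpl⟩ := hp
  obtain ⟨hqc, hqh, hql⟩ := hq
  cases q with
  | nil => simp at hqh
  | cons b' q =>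
    obtain rfl : b = b' := by simpa using hqh.symm
    refine ⟨hpc.append hqc.tail ?_, by simp [List.head?_append, hph], ?_⟩
    · intro x hx y hy
      obtain rfl : x = b := by simpa [hpl] using hx.symm
      exact (List.isChain_cons.1 hqc).1 y hy
    · cases q with
      | nil => simp_all
      | cons d q => simpa [List.getLast?_append] using hql

theorem IsPath.ne_of_mem_dropLast (hp : IsPath succ p a b) (hnd : p.Nodup)
    (hu : u ∈ p.dropLast) : u ≠ b := by
  rw [← List.dropLast_append_getLast? b hp.2.2, List.nodup_append] at hnd
  exact hnd.2.2 u hu b (List.mem_singleton_self b)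

theorem IsPath.exists_last {P : V → Prop} (hp : IsPath succ p a c) (hP : ∃ w ∈ p, P w)
    (hc : ¬ P c) :
    ∃ w τ, P w ∧ IsPath succ τ w c ∧ 2 ≤ τ.length ∧ ∀ u ∈ τ.tail, ¬ P u := by
  induction p generalizing a with
  | nil => simp at hP
  | cons a' rest ih =>
    obtain rfl : a' = a := by simpa using hp.2.1
    by_cases hrest : ∃ w ∈ rest, P w
    · cases rest with
      | nil => simp at hrest
      | cons b rest => exact ih hp.tail hrest
    · simp only [not_exists, not_and] at hrest
      have ha : P a' := by
        obtain ⟨w, hw, hPw⟩ := hP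
        rcases List.mem_cons.1 hw with rfl | hw
        · exact hPw
        · exact absurd hPw (hrest w hw)
      cases rest with
      | nil =>
        obtain rfl : a' = c := by simpa using hp.2.2
        exact absurd ha hc
      | cons b rest => exact ⟨a', _, ha, hp, by simp, hrest⟩

end Paths

section Dataflow

variable {V Var : Type} {G : CFG V} {Def Use : V → Set Var} {Q : Set V} {x : Var} {v w : V}

def ReachingDef (G : CFG V) (Def : V → Set Var) (x : Var) (w v : V) : Prop :=
  x ∈ Def w ∧ ∃ τ, IsPath G.succ τ w v ∧ 2 ≤ τ.length ∧ ∀ u ∈ τ.tail, x ∉ Def u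

theorem mem_of_mem_rv_of_mem_def (hx : x ∈ rv G Def Use Q v) (hxv : x ∈ Def v) : v ∈ Q := by
  obtain ⟨v', hv'Q, -, p, hp, -, hclear⟩ := hx
  by_cases hv : v = v'
  · exact hv ▸ hv'Q
  · exact absurd hxv (hclear v hp.head_mem hv)

theorem ReachingDef.mem_of_mem_rv (hQ : ClosedDD G Def Use Q) (hw : ReachingDef G Def x w v)
    (hx : x ∈ rv G Def Use Q v) : w ∈ Q := by
  obtain ⟨hxw, τ, hτ, hτlen, hτclear⟩ := hw
  obtain ⟨v', hv'Q, hxu, p, hp, hnd, hpclear⟩ := hx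
  have hinterior : ∀ u ∈ (τ ++ p.tail).tail.dropLast, u ∈ τ.tail ∨ u ∈ p.dropLast := by
    intro u hu
    rw [List.tail_append_of_ne_nil hτ.ne_nil, List.dropLast_append] at hu
    split_ifs at hu
    · exact .inl (List.dropLast_subset _ hu)
    · rw [← List.tail_dropLast] at hu
      exact (List.mem_append.1 hu).imp id (List.tail_subset _ ·)
  refine hQ w v' hv'Q
    ⟨x, hxu, hxw, _, hτ.append hp, by simp only [List.length_append]; omega, fun u hu => ?_⟩
  rcases hinterior u hu with hu | hu
  · exact hτclear u hu
  · exact hpclear u (List.dropLast_subset _ hu) (hp.ne_of_mem_dropLast hnd hu)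

theorem exists_reachingDef_of_mem_rv {Start : V}
    (hreach : ∀ v, ∃ p, IsPath G.succ p Start v)
    (hdbu : ∀ v x, x ∈ Use v → ∀ p, IsPath G.succ p Start v → ∃ v0 ∈ p, v0 ≠ v ∧ x ∈ Def v0)
    (hx : x ∈ rv G Def Use Q v) (hxv : x ∉ Def v) : ∃ w, ReachingDef G Def x w v := by
  obtain ⟨v', -, hxu, p, hp, -, hpclear⟩ := hx
  obtain ⟨σ, hσ⟩ := hreach v
  obtain ⟨v0, hv0, hv0v', hxv0⟩ := hdbu v' x hxu _ (hσ.append hp)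
  have hv0σ : v0 ∈ σ := by
    rcases List.mem_append.1 hv0 with hv0 | hv0
    · exact hv0
    · exact absurd hxv0 (hpclear v0 (List.tail_subset _ hv0) hv0v')
  obtain ⟨w, τ, hxw, hτ, hτlen, hτclear⟩ :=
    hσ.exists_last (P := (x ∈ Def ·)) ⟨v0, hv0σ, hxv0⟩ hxv
  exact ⟨w, hxw, τ, hτ, hτlen, hτclear⟩

end Dataflow

theorem rv_disjoint_general {V Var : Type} (G : CFG V)
    (Def Use : V → Set Var) (Start : V)
    (hreach : ∀ v, ∃ p, IsPath G.succ p Start v)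
    (hdbu : ∀ v x, x ∈ Use v → ∀ p, IsPath G.succ p Start v →
      ∃ v0 ∈ p, v0 ≠ v ∧ x ∈ Def v0)
    (Q1 Q2 : Set V)
    (h1 : ClosedDD G Def Use Q1) (h2 : ClosedDD G Def Use Q2)
    (hdisj : Q1 ∩ Q2 = ∅) (v : V) :
    rv G Def Use Q1 v ∩ rv G Def Use Q2 v = ∅ := by
  rw [← Set.disjoint_iff_inter_eq_empty, Set.disjoint_left] at hdisj ⊢
  intro x hx1 hx2
  by_cases hxv : x ∈ Def v
  · exact hdisj (mem_of_mem_rv_of_mem_def hx1 hxv) (mem_of_mem_rv_of_mem_def hx2 hxv)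
  · obtain ⟨w, hw⟩ := exists_reachingDef_of_mem_rv hreach hdbu hx1 hxv
    exact hdisj (hw.mem_of_mem_rv h1 hx1) (hw.mem_of_mem_rv h2 hx2)

/-- If every variable is defined before it is used, and `Q1`, `Q2` are disjoint sets
both closed under data dependence, then `rv(Q1,v)` and `rv(Q2,v)` are disjoint. -/
theorem rv_disjoint {V Var : Type} [Fintype V] (G : CFG V)
    (Def Use : V → Set Var) (Start : V)
    (hreach : ∀ v, ∃ p, IsPath G.succ p Start v)
    (hdbu : ∀ v x, x ∈ Use v → ∀ p, IsPath G.succ p Start v →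
      ∃ v0 ∈ p, v0 ≠ v ∧ x ∈ Def v0)
    (Q1 Q2 : Set V)
    (h1 : ClosedDD G Def Use Q1) (h2 : ClosedDD G Def Use Q2)
    (hdisj : Q1 ∩ Q2 = ∅) (v : V) :
    rv G Def Use Q1 v ∩ rv G Def Use Q2 v = ∅ :=
  rv_disjoint_general G Def Use Start hreach hdbu Q1 Q2 h1 h2 hdisj v

end Slicing
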